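/- Let K be a compact Hausdorff space, ξ an ordinal and n a positive integer. If F is a subset of K^{ω^ξ(n-1)} \ K^{ω^ξ n} (the difference of the indicated Cantor–Bendixson derivatives of K), then CB(F) ≤ ω^ξ. -/

import Mathlib

open Ordinal

/-- The Cantor–Bendixson derivative of a subset `A` of a topological space:
`A` minus its relatively isolated points. -/
def cbDeriv {X : Type*} [TopologicalSpace X] (A : Set X) : Set X :=
  {x ∈ A | ∀ U : Set X, IsOpen U → x ∈ U → ∃ y ∈ U ∩ A, y ≠ x}

/-- Transfinite iterates of the Cantor–Bendixson derivative, with intersections at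
limit stages. -/
noncomputable def cbIter {X : Type*} [TopologicalSpace X] (A : Set X) (o : Ordinal) : Set X :=
  Ordinal.limitRecOn (motive := fun _ => Set X) o A (fun _ ih => cbDeriv ih)
    (fun o _ ih => ⋂ p : Set.Iio o, ih p.1 p.2)

/-- The Cantor–Bendixson index of a (scattered) set: the least ordinal at which the
iterated derivative is empty. -/
noncomputable def cbIndex {X : Type*} [TopologicalSpace X] (A : Set X) : Ordinal :=
  sInf {o | cbIter A o = ∅}

/-!
Derivatives are monotone in the set and additive in the order, `A^(a+b) = (A^a)^b`.
Hence if `F ⊆ A^a`, then `F^b ⊆ A^(a+b) ⊆ A^c` whenever `c ≤ a + b`; since also `F^b ⊆ F`,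
a set `F` disjoint from `A^c` has `F^b = ∅`. With `a = ω^ξ (n-1)`, `b = ω^ξ` and `c = ω^ξ n`
this is the theorem.
-/

namespace CantorBendixson

variable {X : Type*} [TopologicalSpace X]

lemma cbIter_zero (A : Set X) : cbIter A 0 = A := Ordinal.limitRecOn_zero ..

lemma cbIter_add_one (A : Set X) (o : Ordinal) :
    cbIter A (o + 1) = cbDeriv (cbIter A o) := Ordinal.limitRecOn_add_one ..

lemma cbIter_limit (A : Set X) {o : Ordinal} (ho : Order.IsSuccLimit o) :
    cbIter A o = ⋂ p : Set.Iio o, cbIter A p.1 := Ordinal.limitRecOn_limit _ _ _ _ ho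

lemma cbDeriv_subset (A : Set X) : cbDeriv A ⊆ A := fun _ hx => hx.1

lemma cbDeriv_mono {A B : Set X} (h : A ⊆ B) : cbDeriv A ⊆ cbDeriv B := by
  rintro x ⟨hxA, hx⟩
  refine ⟨h hxA, fun U hU hxU => ?_⟩
  obtain ⟨y, ⟨hyU, hyA⟩, hyx⟩ := hx U hU hxU
  exact ⟨y, ⟨hyU, h hyA⟩, hyx⟩

lemma cbIter_mono {A B : Set X} (h : A ⊆ B) (o : Ordinal) : cbIter A o ⊆ cbIter B o := by
  induction o using Ordinal.limitRecOn with
  | zero => simpa only [cbIter_zero]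
  | add_one o ih =>
    rw [cbIter_add_one, cbIter_add_one]
    exact cbDeriv_mono ih
  | limit o ho ih =>
    rw [cbIter_limit A ho, cbIter_limit B ho]
    exact Set.iInter_mono fun p => ih p.1 p.2

lemma cbIter_antitone (A : Set X) : Antitone (cbIter A) := by
  intro a b hab
  induction b using Ordinal.limitRecOn with
  | zero => rw [nonpos_iff_eq_zero.mp hab]
  | add_one o ih =>
    rcases hab.eq_or_lt with rfl | hao
    · exact subset_rfl
    · rw [cbIter_add_one]
      exact (cbDeriv_subset _).trans (ih (Order.le_of_lt_succ hao))
  | limit o ho _ =>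
    rcases hab.eq_or_lt with rfl | hao
    · exact subset_rfl
    · rw [cbIter_limit A ho]
      exact Set.iInter_subset_of_subset ⟨a, hao⟩ subset_rfl

lemma cbIter_subset_self (A : Set X) (o : Ordinal) : cbIter A o ⊆ A := by
  simpa only [cbIter_zero] using cbIter_antitone A (zero_le : 0 ≤ o)

lemma cbIter_add (A : Set X) (a b : Ordinal) :
    cbIter A (a + b) = cbIter (cbIter A a) b := by
  induction b using Ordinal.limitRecOn with
  | zero => rw [add_zero, cbIter_zero]
  | add_one o ih => rw [← add_assoc, cbIter_add_one, cbIter_add_one, ih]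
  | limit o ho ih =>
    rw [cbIter_limit A (Ordinal.isSuccLimit_add a ho), cbIter_limit (cbIter A a) ho]
    refine subset_antisymm (Set.subset_iInter fun q => ?_) (Set.subset_iInter fun p => ?_)
    · rw [← ih q.1 q.2]
      exact Set.iInter_subset_of_subset ⟨a + q.1, (add_lt_add_iff_left a).mpr q.2⟩ subset_rfl
    · -- every `p < a + o` lies below `a + q` for some `q < o`
      obtain ⟨q, hqo, hpq⟩ : ∃ q < o, p.1 ≤ a + q := by
        rcases le_or_gt p.1 a with hpa | hap
        · exact ⟨0, ho.bot_lt, by rwa [add_zero]⟩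
        · refine ⟨p.1 - a, ?_, (Ordinal.add_sub_cancel_of_le hap.le).ge⟩
          rw [← add_lt_add_iff_left a, Ordinal.add_sub_cancel_of_le hap.le]
          exact p.2
      refine (Set.iInter_subset_of_subset ⟨q, hqo⟩ subset_rfl).trans ?_
      rw [← ih q hqo]
      exact cbIter_antitone A hpq

theorem cbIter_eq_empty_of_subset_diff {A F : Set X} {a b c : Ordinal} (hc : c ≤ a + b)
    (hF : F ⊆ cbIter A a \ cbIter A c) : cbIter F b = ∅ := by
  refine Set.eq_empty_of_forall_notMem fun x hx => (hF (cbIter_subset_self F b hx)).2 ?_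
  have hxab : x ∈ cbIter A (a + b) := by
    rw [cbIter_add]
    exact cbIter_mono (fun y hy => (hF hy).1) b hx
  exact cbIter_antitone A hc hxab

end CantorBendixson

open CantorBendixson in
theorem stmt7_general {K : Type*} [TopologicalSpace K]
    (ξ : Ordinal) (n : ℕ) (F : Set K)
    (hF : F ⊆ cbIter (Set.univ : Set K) (omega0 ^ ξ * (↑(n - 1) : Ordinal)) \
      cbIter (Set.univ : Set K) (omega0 ^ ξ * (n : Ordinal))) :
    cbIter F (omega0 ^ ξ) = ∅ := by
  refine cbIter_eq_empty_of_subset_diff ?_ hF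
  rw [← mul_add_one, ← Nat.cast_add_one]
  gcongr
  omega

theorem stmt7 {K : Type*} [TopologicalSpace K] [CompactSpace K] [T2Space K]
    (ξ : Ordinal) (n : ℕ) (hn : 1 ≤ n) (F : Set K)
    (hF : F ⊆ cbIter (Set.univ : Set K) (omega0 ^ ξ * (↑(n - 1) : Ordinal)) \
      cbIter (Set.univ : Set K) (omega0 ^ ξ * (n : Ordinal))) :
    cbIter F (omega0 ^ ξ) = ∅ :=
  stmt7_general ξ n F hF
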